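/- arXiv:2510.07204 — 2 statements merged into one kernel-verified Lean document; each statement's English description precedes it below -/
import Mathlib

section
/- Let λ > 0, let b̂ ∈ ℝ^k with b̂_j ≠ 0 for all j, let G ∈ ℝ^k and d ∈ ℝ^k be such that for every j: (i) if d_j + b̂_j ≠ 0 then G_j = −(λ/(2|b̂_j|))·sign(d_j + b̂_j), and (ii) if d_j + b̂_j = 0 then |G_j| ≤ λ/(2|b̂_j|). Then Σ_{j=1}^k d_j·G_j ≤ k·λ/2. -/
open Finset

/-- Algebraic content of the KKT lemma: under the adaptive LASSO
Karush–Kuhn–Tucker conditions, `∑ j, d_j * G_j ≤ k*λ/2`. -/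
theorem stmt_3 (k : ℕ) (lam : ℝ) (hlam : 0 < lam)
    (bhat G d : Fin k → ℝ) (hbhat : ∀ j, bhat j ≠ 0)
    (hKKT1 : ∀ j, d j + bhat j ≠ 0 →
      G j = -(lam / (2 * |bhat j|)) * Real.sign (d j + bhat j))
    (hKKT2 : ∀ j, d j + bhat j = 0 → |G j| ≤ lam / (2 * |bhat j|)) :
    ∑ j : Fin k, d j * G j ≤ (k : ℝ) * lam / 2 := by
  have key : ∀ j, d j * G j ≤ lam / 2 := by
    intro j
    have hbpos : 0 < |bhat j| := abs_pos.2 (hbhat j)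
    have hcpos : 0 < lam / (2 * |bhat j|) := by positivity
    by_cases h : d j + bhat j = 0
    · have hG := hKKT2 j h
      have hd : d j = -bhat j := by linarith
      calc d j * G j ≤ |d j * G j| := le_abs_self _
        _ = |bhat j| * |G j| := by rw [abs_mul, hd, abs_neg]
        _ ≤ |bhat j| * (lam / (2 * |bhat j|)) :=
            mul_le_mul_of_nonneg_left hG hbpos.le
        _ = lam / 2 := by field_simp
    · have hG := hKKT1 j h
      rcases Real.sign_apply_eq_of_ne_zero _ h with hs | hs
      · have hneg : d j + bhat j < 0 := by
          rcases lt_trichotomy (d j + bhat j) 0 with h1 | h1 | h1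
          · exact h1
          · exact absurd h1 h
          · rw [Real.sign_of_pos h1] at hs; norm_num at hs
        have hle : d j ≤ |bhat j| := by
          have := neg_le_abs (bhat j); linarith
        rw [hG, hs]
        have : (lam / (2 * |bhat j|)) * d j ≤ (lam / (2 * |bhat j|)) * |bhat j| :=
          mul_le_mul_of_nonneg_left hle hcpos.le
        have heq : (lam / (2 * |bhat j|)) * |bhat j| = lam / 2 := by field_simp
        nlinarith
      · have hpos : 0 < d j + bhat j := by
          rcases lt_trichotomy (d j + bhat j) 0 with h1 | h1 | h1
          · rw [Real.sign_of_neg h1] at hs; norm_num at hs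
          · exact absurd h1 h
          · exact h1
        have hle : -(d j) ≤ |bhat j| := by
          have := le_abs_self (bhat j); linarith
        rw [hG, hs]
        have : (lam / (2 * |bhat j|)) * (-(d j)) ≤ (lam / (2 * |bhat j|)) * |bhat j| :=
          mul_le_mul_of_nonneg_left hle hcpos.le
        have heq : (lam / (2 * |bhat j|)) * |bhat j| = lam / 2 := by field_simp
        nlinarith
  calc ∑ j : Fin k, d j * G j ≤ ∑ _j : Fin k, (lam / 2) :=
        Finset.sum_le_sum fun j _ => key j
    _ = (k : ℝ) * lam / 2 := by simp [Finset.sum_const]; ring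
end

section
/- Let ζ > 0, λ ≥ 0, β₀ ∈ ℝ, and Z ∈ ℝ with Z + β₀ ≠ 0. Define the limit random variable L = 1{ζ^{1/2}|Z + β₀| > √(λ/2)}·(Z − (λ/(2ζ))·(Z + β₀)^{−1}) − 1{ζ^{1/2}|Z + β₀| ≤ √(λ/2)}·β₀. Then L is the unique minimizer of V(z) = ζ·z² − 2·ζ·Z·z + λ·(|z + β₀| − |β₀|)/|Z + β₀| over z ∈ ℝ when λ > 0 and β₀ ∈ ℝ; i.e., the explicit conservative-tuning limit of Theorem 3(a) coincides with the argmin characterization of Theorem 5(a) in the univariate case. -/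
/-- Equivalence of the explicit conservative-tuning limit (Theorem 3(a)) with the
argmin characterization (Theorem 5(a)) in the univariate case: the explicit
limit `L` is the unique minimizer of
`V(z) = ζz² − 2ζZz + λ(|z + β₀| − |β₀|)/|Z + β₀|`. -/
theorem stmt_18 (zeta lam beta0 Z : ℝ) (hzeta : 0 < zeta) (hlam : 0 < lam)
    (hne : Z + beta0 ≠ 0)
    (L : ℝ)
    (hL : L =
      (if Real.sqrt zeta * |Z + beta0| > Real.sqrt (lam / 2) then (1 : ℝ) else 0) *
        (Z - lam / (2 * zeta) * (Z + beta0)⁻¹) -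
      (if Real.sqrt zeta * |Z + beta0| ≤ Real.sqrt (lam / 2) then (1 : ℝ) else 0) *
        beta0)
    (V : ℝ → ℝ)
    (hV : ∀ z, V z =
      zeta * z ^ 2 - 2 * zeta * Z * z + lam * (|z + beta0| - |beta0|) / |Z + beta0|) :
    (∀ z : ℝ, V L ≤ V z) ∧ (∀ z : ℝ, (∀ y : ℝ, V z ≤ V y) → z = L) := by
  have habs : 0 < |Z + beta0| := abs_pos.mpr hne
  set c : ℝ := lam / |Z + beta0| with hc
  have hc0 : 0 < c := div_pos hlam habs
  have hVc : ∀ y, V y = zeta * y ^ 2 - 2 * zeta * Z * y + c * (|y + beta0| - |beta0|) := by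
    intro y; rw [hV, hc]; ring
  have hcond : (Real.sqrt zeta * |Z + beta0| > Real.sqrt (lam / 2)) ↔
      lam / 2 < zeta * (Z + beta0) ^ 2 := by
    rw [show Real.sqrt zeta * |Z + beta0| = Real.sqrt (zeta * (Z + beta0) ^ 2) by
      rw [Real.sqrt_mul hzeta.le, Real.sqrt_sq_eq_abs]]
    exact Real.sqrt_lt_sqrt_iff (by positivity)
  have key : ∀ z, V L + zeta * (z - L) ^ 2 ≤ V z := by
    intro z
    have h1 : z + beta0 ≤ |z + beta0| := le_abs_self _
    have h1' : -(z + beta0) ≤ |z + beta0| := neg_le_abs _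
    by_cases hcnd : Real.sqrt zeta * |Z + beta0| > Real.sqrt (lam / 2)
    · have h2 : ¬ (Real.sqrt zeta * |Z + beta0| ≤ Real.sqrt (lam / 2)) := not_le.mpr hcnd
      rw [if_pos hcnd, if_neg h2] at hL
      have hgt : lam / 2 < zeta * (Z + beta0) ^ 2 := hcond.mp hcnd
      have hL' : L = Z - lam / (2 * zeta) * (Z + beta0)⁻¹ := by rw [hL]; ring
      have hLd : 2 * zeta * (Z + beta0) * (L - Z) = -lam := by
        rw [hL']; field_simp; ring
      rcases lt_or_gt_of_ne hne with hneg | hpos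
      · -- Z + beta0 < 0
        have haeq : |Z + beta0| = -(Z + beta0) := abs_of_neg hneg
        have hLb : L + beta0 < 0 := by
          nlinarith [hLd, hgt, mul_pos hzeta (neg_pos.mpr hneg)]
        have hrel : 2 * zeta * (L - Z) = c := by
          rw [hc, haeq, eq_div_iff (by intro h; exact hne (by linarith) : -(Z + beta0) ≠ 0)]
          linear_combination -hLd
        rw [hVc, hVc, abs_of_neg hLb]
        have heq : (zeta * z ^ 2 - 2 * zeta * Z * z + c * (|z + beta0| - |beta0|))
            - (zeta * L ^ 2 - 2 * zeta * Z * L + c * (-(L + beta0) - |beta0|)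
              + zeta * (z - L) ^ 2)
            = c * (|z + beta0| + (z + beta0)) := by
          linear_combination (z - L) * hrel
        have hnn : 0 ≤ c * (|z + beta0| + (z + beta0)) :=
          mul_nonneg hc0.le (by linarith)
        linarith [heq, hnn]
      · -- Z + beta0 > 0
        have haeq : |Z + beta0| = Z + beta0 := abs_of_pos hpos
        have hLb : 0 < L + beta0 := by
          nlinarith [hLd, hgt, mul_pos hzeta hpos]
        have hrel : 2 * zeta * (L - Z) = -c := by
          rw [hc, haeq, ← neg_div, eq_div_iff hne]
          linear_combination hLd
        rw [hVc, hVc, abs_of_pos hLb]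
        have heq : (zeta * z ^ 2 - 2 * zeta * Z * z + c * (|z + beta0| - |beta0|))
            - (zeta * L ^ 2 - 2 * zeta * Z * L + c * ((L + beta0) - |beta0|)
              + zeta * (z - L) ^ 2)
            = c * (|z + beta0| - (z + beta0)) := by
          linear_combination (z - L) * hrel
        have hnn : 0 ≤ c * (|z + beta0| - (z + beta0)) :=
          mul_nonneg hc0.le (by linarith)
        linarith [heq, hnn]
    · have h2 : Real.sqrt zeta * |Z + beta0| ≤ Real.sqrt (lam / 2) := not_lt.mp hcnd
      rw [if_neg hcnd, if_pos h2] at hL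
      have hle : zeta * (Z + beta0) ^ 2 ≤ lam / 2 := not_lt.mp (fun h => hcnd (hcond.mpr h))
      have hLe : L = -beta0 := by rw [hL]; ring
      have hkey : 2 * zeta * ((Z + beta0) * (z + beta0)) ≤ c * |z + beta0| := by
        rw [hc, div_mul_eq_mul_div, le_div_iff₀ habs]
        have hb : (Z + beta0) * (z + beta0) ≤ |Z + beta0| * |z + beta0| := by
          calc (Z + beta0) * (z + beta0) ≤ |(Z + beta0) * (z + beta0)| := le_abs_self _
          _ = |Z + beta0| * |z + beta0| := abs_mul _ _
        have hm1 := mul_le_mul_of_nonneg_left hb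
          (by positivity : (0:ℝ) ≤ 2 * zeta * |Z + beta0|)
        have hm2 := mul_le_mul_of_nonneg_right hle
          (by positivity : (0:ℝ) ≤ 2 * |z + beta0|)
        have hsq2 : 2 * zeta * |Z + beta0| * (|Z + beta0| * |z + beta0|)
            = zeta * (Z + beta0) ^ 2 * (2 * |z + beta0|) := by
          rw [show (Z + beta0) ^ 2 = |Z + beta0| ^ 2 from (sq_abs _).symm]; ring
        nlinarith [hm1, hm2, hsq2]
      rw [hVc, hVc, hLe]
      have heq : (zeta * z ^ 2 - 2 * zeta * Z * z + c * (|z + beta0| - |beta0|))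
          - (zeta * (-beta0) ^ 2 - 2 * zeta * Z * (-beta0)
            + c * (|(-beta0) + beta0| - |beta0|) + zeta * (z - -beta0) ^ 2)
          = c * |z + beta0| - 2 * zeta * ((Z + beta0) * (z + beta0)) := by
        rw [show |(-beta0) + beta0| = (0:ℝ) by simp]
        ring
      linarith [heq, hkey]
  constructor
  · intro z
    have := key z
    nlinarith [sq_nonneg (z - L)]
  · intro z hz
    have h1 := key z
    have h2 := hz L
    have h3 : zeta * (z - L) ^ 2 ≤ 0 := by linarith
    have h4 : (z - L) ^ 2 ≤ 0 := by nlinarith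
    have h5 : z - L = 0 := by nlinarith [sq_nonneg (z - L)]
    linarith
end
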